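/- arXiv:1210.1439 — 2 statements merged into one kernel-verified Lean document; each statement's English description precedes it below -/
import Mathlib

section
/- Let p be a prime number and let t be a real number with |t| < p. Define S(t) = ∑_{n odd, n≥1} ζ(n+1) t^{n+1} / p^n and D(t) = (p − 2S(t))² + (π t)². Then D(t) ≠ 0 and exp(−2πit/p) = (1 − 2π²t²/D(t)) + i · (2πt(2S(t) − p)/D(t)). -/
/-!
Put `t = p x` with `|x| < 1`. Expanding `ζ(2k+2) = ∑ₙ n^-(2k+2)` and summing the geometric
series in `k` first (all terms are nonnegative, so the order of summation is immaterial) gives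
`S(t) = p ∑_{n ≥ 1} x² / (n² - x²)`, which by the partial fraction expansion of the cotangent is
`p (1 - π x cot (π x)) / 2`. Hence `p - 2 S(t) = π t cot (π x)` and `D(t) = (π t)² / sin² (π x)`,
and the claimed formula is the double-angle formula for `exp (-2 π i x)`.
-/

/-- `S p t = ∑_{n odd, n ≥ 1} ζ(n+1) t^(n+1) / p^n`, the sum over odd `n = 2k+1`. -/
noncomputable def S (p : ℕ) (t : ℝ) : ℝ :=
  ∑' k : ℕ, (riemannZeta (2 * k + 2)).re * t ^ (2 * k + 2) / (p : ℝ) ^ (2 * k + 1)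

/-- `D p t = (p - 2 S(t))² + (π t)²`. -/
noncomputable def D (p : ℕ) (t : ℝ) : ℝ :=
  ((p : ℝ) - 2 * S p t) ^ 2 + (Real.pi * t) ^ 2

open Real

lemma HasSum.fiberwise_comm_of_nonneg {β γ : Type*} {f : β × γ → ℝ} (hf : 0 ≤ f)
    {g : β → ℝ} {h : γ → ℝ} {a : ℝ} (hg : ∀ b, HasSum (fun c ↦ f (b, c)) (g b))
    (hh : ∀ c, HasSum (fun b ↦ f (b, c)) (h c)) (ha : HasSum g a) : HasSum h a := by
  have hsum : Summable f := (summable_prod_of_nonneg hf).mpr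
    ⟨fun b ↦ (hg b).summable, by simpa only [fun b ↦ (hg b).tsum_eq] using ha.summable⟩
  have htot : HasSum f a := by
    simpa only [(hsum.hasSum.prod_fiberwise hg).unique ha] using hsum.hasSum
  exact ((Equiv.prodComm γ β).hasSum_iff.mpr htot).prod_fiberwise hh

lemma hasSum_one_div_nat_add_one_pow_riemannZeta_re {k : ℕ} (hk : 1 < k) :
    HasSum (fun n : ℕ ↦ 1 / ((n : ℝ) + 1) ^ k) (riemannZeta k).re := by
  have hs : Summable (fun n : ℕ ↦ 1 / ((n : ℝ) + 1) ^ k) := by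
    simpa using (summable_nat_add_iff 1).mpr (Real.summable_one_div_nat_pow.mpr hk)
  convert hs.hasSum
  rw [zeta_eq_tsum_one_div_nat_add_one_cpow (by simpa using hk), ← Complex.ofReal_re (∑' _, _),
    Complex.ofReal_tsum]
  simp [Complex.cpow_natCast]

lemma hasSum_sq_div_sq_sub_sq_cot {x : ℝ} (hx : ∀ n : ℤ, x ≠ n) :
    HasSum (fun n : ℕ ↦ x ^ 2 / (((n : ℝ) + 1) ^ 2 - x ^ 2)) ((1 - π * x * cot (π * x)) / 2) := by
  have hxC : (x : ℂ) ∈ Complex.integerComplement :=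
    fun ⟨n, hn⟩ ↦ hx n (by exact_mod_cast hn.symm)
  have hx0 : (x : ℂ) ≠ 0 := Complex.integerComplement.ne_zero hxC
  have h := (summable_cotTerm hxC).hasSum.mul_left (-(x : ℂ) / 2)
  rw [← cot_series_rep' hxC] at h
  have hsum : (((1 - π * x * cot (π * x)) / 2 : ℝ) : ℂ)
      = -(x : ℂ) / 2 * (π * Complex.cot (π * x) - 1 / x) := by
    push_cast
    field_simp
    ring
  rw [← Complex.hasSum_ofReal, hsum]
  refine h.congr_fun fun n ↦ ?_
  have hn : (x : ℂ) ^ 2 - (n + 1) ^ 2 ≠ 0 := sub_ne_zero.mpr <| by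
    exact_mod_cast Complex.integerComplement_pow_two_ne_pow_two hxC (n + 1)
  rw [cotTerm_identity hxC, ← sq_sub_sq]
  push_cast
  rw [← neg_sub, div_neg]
  field_simp

lemma ne_intCast_of_abs_lt_one {x : ℝ} (hx0 : x ≠ 0) (hx : |x| < 1) (n : ℤ) : x ≠ n := by
  rintro rfl
  have : |n| < 1 := by exact_mod_cast hx
  exact hx0 (by simpa [Int.abs_lt_one_iff] using this)

lemma hasSum_riemannZeta_mul_pow_eq_cot {x : ℝ} (hx0 : x ≠ 0) (hx : |x| < 1) :
    HasSum (fun k : ℕ ↦ (riemannZeta (2 * k + 2)).re * x ^ (2 * k + 2))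
      ((1 - π * x * cot (π * x)) / 2) := by
  refine HasSum.fiberwise_comm_of_nonneg
    (f := fun q : ℕ × ℕ ↦ ((x / (q.1 + 1)) ^ 2) ^ (q.2 + 1)) (fun _ ↦ by positivity)
    (fun n ↦ ?_) (fun k ↦ ?_) (hasSum_sq_div_sq_sub_sq_cot (ne_intCast_of_abs_lt_one hx0 hx))
  · have hn : 1 ≤ ((n : ℝ) + 1) ^ 2 := by nlinarith [(n.cast_nonneg : (0 : ℝ) ≤ n)]
    have hx2 : x ^ 2 < 1 := by nlinarith [sq_abs x, abs_nonneg x]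
    have hr : (x / (n + 1)) ^ 2 < 1 := by
      rw [div_pow, div_lt_one (by positivity)]
      linarith
    have h := (hasSum_geometric_of_lt_one (sq_nonneg _) hr).mul_left ((x / (n + 1)) ^ 2)
    have hsum : (x / (n + 1)) ^ 2 * (1 - (x / (n + 1)) ^ 2)⁻¹ = x ^ 2 / ((n + 1) ^ 2 - x ^ 2) := by
      have : ((n : ℝ) + 1) ^ 2 - x ^ 2 ≠ 0 := by linarith
      field_simp
    exact hsum ▸ h.congr_fun fun k ↦ pow_succ' _ _
  · have h := (hasSum_one_div_nat_add_one_pow_riemannZeta_re (k := 2 * k + 2) (by omega)).mul_right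
      (x ^ (2 * k + 2))
    push_cast at h
    refine h.congr_fun fun n ↦ ?_
    rw [← pow_mul, div_pow]
    ring

lemma natCast_sub_two_mul_S_eq_cot {p : ℕ} (hp : (p : ℝ) ≠ 0) {x : ℝ} (hx0 : x ≠ 0)
    (hx : |x| < 1) : (p : ℝ) - 2 * S p (p * x) = π * (p * x) * cot (π * x) := by
  have hS : HasSum
      (fun k : ℕ ↦ (riemannZeta (2 * k + 2)).re * (p * x) ^ (2 * k + 2) / (p : ℝ) ^ (2 * k + 1))
      (p * ((1 - π * x * cot (π * x)) / 2)) :=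
    ((hasSum_riemannZeta_mul_pow_eq_cot hx0 hx).mul_left (p : ℝ)).congr_fun fun k ↦ by
      field_simp
      ring
  rw [S, hS.tsum_eq]
  ring

lemma exp_neg_two_mul_mul_I_eq_cot {θ u : ℝ} (hθ : sin θ ≠ 0) (hu : u ≠ 0) :
    Complex.exp (-(2 * θ) * Complex.I) = ((1 - 2 * u ^ 2 / ((u * cot θ) ^ 2 + u ^ 2) : ℝ) : ℂ)
      + Complex.I * ((2 * u * -(u * cot θ) / ((u * cot θ) ^ 2 + u ^ 2) : ℝ) : ℂ) := by
  have hD : (u * cot θ) ^ 2 + u ^ 2 = u ^ 2 / sin θ ^ 2 := by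
    rw [cot_eq_cos_div_sin]
    field_simp
    linear_combination cos_sq_add_sin_sq θ
  have hre : 1 - 2 * u ^ 2 / ((u * cot θ) ^ 2 + u ^ 2) = cos (-(2 * θ)) := by
    rw [hD, cos_neg, cos_two_mul]
    field_simp
    linear_combination -2 * sin_sq_add_cos_sq θ
  have him : 2 * u * -(u * cot θ) / ((u * cot θ) ^ 2 + u ^ 2) = sin (-(2 * θ)) := by
    rw [hD, sin_neg, sin_two_mul, cot_eq_cos_div_sin]
    field_simp
  rw [hre, him, Complex.ofReal_cos, Complex.ofReal_sin, mul_comm Complex.I, ← Complex.exp_mul_I]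
  push_cast
  rfl

theorem stmt0_general (p : ℕ) (t : ℝ) (ht : |t| < (p : ℝ)) :
    D p t ≠ 0 ∧
      Complex.exp (-(2 * Real.pi * Complex.I * t) / p) =
        ((1 - 2 * Real.pi ^ 2 * t ^ 2 / D p t : ℝ) : ℂ) +
          Complex.I * ((2 * Real.pi * t * (2 * S p t - p) / D p t : ℝ) : ℂ) := by
  have hp : (0 : ℝ) < p := (abs_nonneg t).trans_lt ht
  rcases eq_or_ne t 0 with rfl | ht0
  · simp [D, S, hp.ne']
  obtain ⟨x, rfl⟩ : ∃ x : ℝ, t = p * x := ⟨t / p, by field_simp⟩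
  have hx0 : x ≠ 0 := right_ne_zero_of_mul ht0
  have hx : |x| < 1 := by rwa [abs_mul, abs_of_pos hp, mul_lt_iff_lt_one_right hp] at ht
  have hA := natCast_sub_two_mul_S_eq_cot hp.ne' hx0 hx
  have hsin : sin (π * x) ≠ 0 := Real.sin_ne_zero_iff.mpr fun n h ↦
    ne_intCast_of_abs_lt_one hx0 hx n (mul_right_cancel₀ pi_ne_zero (h.trans (mul_comm π x))).symm
  refine ⟨by rw [D, hA]; positivity, ?_⟩
  convert exp_neg_two_mul_mul_I_eq_cot hsin (mul_ne_zero pi_ne_zero ht0) using 3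
  · have hpC : (p : ℂ) ≠ 0 := by exact_mod_cast hp.ne'
    push_cast
    field_simp
  · rw [D, hA]
    ring
  · rw [D, hA, show 2 * S p (p * x) - p = -(p - 2 * S p (p * x)) by ring, hA]
    congr 1
    ring

theorem stmt0 (p : ℕ) (hp : p.Prime) (t : ℝ) (ht : |t| < (p : ℝ)) :
    D p t ≠ 0 ∧
      Complex.exp (-(2 * Real.pi * Complex.I * t) / p) =
        ((1 - 2 * Real.pi ^ 2 * t ^ 2 / D p t : ℝ) : ℂ) +
          Complex.I * ((2 * Real.pi * t * (2 * S p t - p) / D p t : ℝ) : ℂ) :=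
  stmt0_general p t ht
end

section
/- Let p be a prime and t a real number with |t| < p. Define S(t) = ∑_{n odd, n≥1} ζ(n+1) t^{n+1}/p^n, A₁(t) = ∑_{n≥1} 1/(n(1 − t/p + n)) and B₁(t) = ∑_{n≥1} 1/(n(1 + t/p + n)). Then 2S(t) = t ( 2pt/(p² − t²) − (1 − t/p) A₁(t) + (1 + t/p) B₁(t) ). -/
/-- `A₁(t) = ∑_{n ≥ 1} 1 / (n (1 - t/p + n))`. -/
noncomputable def A₁ (p : ℕ) (t : ℝ) : ℝ :=
  ∑' n : ℕ, 1 / (((n : ℝ) + 1) * (1 - t / p + ((n : ℝ) + 1)))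

/-- `B₁(t) = ∑_{n ≥ 1} 1 / (n (1 + t/p + n))`. -/
noncomputable def B₁ (p : ℕ) (t : ℝ) : ℝ :=
  ∑' n : ℕ, 1 / (((n : ℝ) + 1) * (1 + t / p + ((n : ℝ) + 1)))

lemma riemannZeta_two_mul_nat_add_two_re (k : ℕ) :
    (riemannZeta (2 * k + 2)).re = ∑' m : ℕ, 1 / ((m : ℝ) + 1) ^ (2 * k + 2) := by
  have hs : (2 * (k : ℂ) + 2) = ((2 * k + 2 : ℕ) : ℂ) := by push_cast; ring
  rw [hs, zeta_eq_tsum_one_div_nat_add_one_cpow (by norm_cast; omega)]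
  simp only [Complex.cpow_natCast]
  rw [← Complex.ofReal_re (∑' m : ℕ, _), Complex.ofReal_tsum]
  push_cast
  rfl

lemma one_le_nat_add_one_sq (m : ℕ) : (1 : ℝ) ≤ ((m : ℝ) + 1) ^ 2 :=
  one_le_pow₀ (le_add_of_nonneg_left m.cast_nonneg)

lemma summable_one_div_nat_add_one_sq : Summable fun m : ℕ => 1 / ((m : ℝ) + 1) ^ 2 := by
  simpa using (summable_nat_add_iff 1).mpr (Real.summable_one_div_nat_pow.mpr one_lt_two)

lemma summable_one_div_nat_add_one_sq_sub_sq {x : ℝ} (hx : |x| < 1) :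
    Summable fun m : ℕ => 1 / (((m : ℝ) + 1) ^ 2 - x ^ 2) := by
  have hx2 : x ^ 2 < 1 := (sq_lt_one_iff_abs_lt_one x).mpr hx
  refine (summable_one_div_nat_add_one_sq.mul_left (1 - x ^ 2)⁻¹).of_nonneg_of_le
    (fun m => one_div_nonneg.mpr (by linarith [one_le_nat_add_one_sq m])) (fun m => ?_)
  have h1 := one_le_nat_add_one_sq m
  calc 1 / (((m : ℝ) + 1) ^ 2 - x ^ 2) ≤ 1 / ((1 - x ^ 2) * ((m : ℝ) + 1) ^ 2) :=
        one_div_le_one_div_of_le (by nlinarith) (by nlinarith)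
    _ = (1 - x ^ 2)⁻¹ * (1 / ((m : ℝ) + 1) ^ 2) := by rw [← one_div, one_div_mul_one_div]

lemma hasSum_div_pow_succ {y c : ℝ} (h : |y| < c) :
    HasSum (fun k : ℕ => (y / c) ^ (k + 1)) (y / (c - y)) := by
  have hc : 0 < c := (abs_nonneg y).trans_lt h
  have hr : |y / c| < 1 := by rwa [abs_div, abs_of_pos hc, div_lt_one hc]
  have hcy : c - y ≠ 0 := by linarith [le_abs_self y]
  rw [show y / (c - y) = y / c * (1 - y / c)⁻¹ by field_simp]
  simpa only [pow_succ'] using (hasSum_geometric_of_abs_lt_one hr).mul_left (y / c)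

theorem tsum_riemannZeta_two_mul_nat_add_two_mul_pow {x : ℝ} (hx : |x| < 1) :
    ∑' k : ℕ, (riemannZeta (2 * k + 2)).re * x ^ (2 * k + 2) =
      x ^ 2 * ∑' m : ℕ, 1 / (((m : ℝ) + 1) ^ 2 - x ^ 2) := by
  set F : ℕ → ℕ → ℝ := fun m k => (x ^ 2 / ((m : ℝ) + 1) ^ 2) ^ (k + 1)
  have hrow (m : ℕ) : HasSum (F m) (x ^ 2 / (((m : ℝ) + 1) ^ 2 - x ^ 2)) := by
    refine hasSum_div_pow_succ ?_
    rw [abs_of_nonneg (sq_nonneg x)]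
    linarith [(sq_lt_one_iff_abs_lt_one x).mpr hx, one_le_nat_add_one_sq m]
  have hF : Summable (Function.uncurry F) := by
    have hF₀ : 0 ≤ Function.uncurry F := fun q => by
      simp only [Pi.zero_apply, Function.uncurry, F]
      positivity
    refine (summable_prod_of_nonneg hF₀).mpr ⟨fun m => (hrow m).summable, ?_⟩
    simp_rw [Function.uncurry_apply_pair, (hrow _).tsum_eq, div_eq_mul_one_div (x ^ 2)]
    exact (summable_one_div_nat_add_one_sq_sub_sq hx).mul_left _
  calc ∑' k : ℕ, (riemannZeta (2 * k + 2)).re * x ^ (2 * k + 2)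
      = ∑' k, ∑' m, F m k := by
        refine tsum_congr fun k => ?_
        rw [riemannZeta_two_mul_nat_add_two_re, ← tsum_mul_right]
        refine tsum_congr fun m => ?_
        simp only [F]
        rw [div_pow, ← pow_mul, ← pow_mul, one_div_mul_eq_div]
        ring
    _ = ∑' m, ∑' k, F m k := hF.tsum_comm
    _ = x ^ 2 * ∑' m : ℕ, 1 / (((m : ℝ) + 1) ^ 2 - x ^ 2) := by
        simp_rw [(hrow _).tsum_eq, ← tsum_mul_left, mul_one_div]

lemma S_eq_mul_tsum (p : ℕ) (t : ℝ) (hp : (p : ℝ) ≠ 0) :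
    S p t = p * ∑' k : ℕ, (riemannZeta (2 * k + 2)).re * (t / p) ^ (2 * k + 2) := by
  rw [S, ← tsum_mul_left]
  refine tsum_congr fun k => ?_
  rw [div_pow]
  field_simp
  ring

lemma summable_one_div_nat_add_one_mul_add {c : ℝ} (hc : 0 ≤ c) :
    Summable fun n : ℕ => 1 / (((n : ℝ) + 1) * (c + ((n : ℝ) + 1))) := by
  refine summable_one_div_nat_add_one_sq.of_nonneg_of_le (fun n => by positivity) fun n => ?_
  rw [sq]
  exact one_div_le_one_div_of_le (by positivity)
    (mul_le_mul_of_nonneg_left (by linarith) (by positivity))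

lemma one_add_div_sub_one_sub_div {x n : ℝ} (hn : n ≠ 0) (hplus : 1 + x + n ≠ 0)
    (hminus : 1 - x + n ≠ 0) :
    (1 + x) / (n * (1 + x + n)) - (1 - x) / (n * (1 - x + n)) =
      2 * x * (1 / ((n + 1) ^ 2 - x ^ 2)) := by
  have h : (n + 1) ^ 2 - x ^ 2 ≠ 0 := by
    rw [sq_sub_sq]
    exact mul_ne_zero (by convert hplus using 1; ring) (by convert hminus using 1; ring)
  field_simp
  ring

lemma one_add_mul_tsum_sub_one_sub_mul_tsum {x : ℝ} (hx : |x| < 1) :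
    (1 + x) * ∑' n : ℕ, 1 / (((n : ℝ) + 1) * (1 + x + ((n : ℝ) + 1)))
      - (1 - x) * ∑' n : ℕ, 1 / (((n : ℝ) + 1) * (1 - x + ((n : ℝ) + 1)))
      = 2 * x * (∑' m : ℕ, 1 / (((m : ℝ) + 1) ^ 2 - x ^ 2) - 1 / (1 - x ^ 2)) := by
  obtain ⟨hlo, hhi⟩ := abs_lt.mp hx
  have hG := summable_one_div_nat_add_one_sq_sub_sq hx
  rw [hG.tsum_eq_zero_add, ← tsum_mul_left, ← tsum_mul_left,
    ← (summable_one_div_nat_add_one_mul_add (by linarith)).mul_left _ |>.tsum_sub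
      ((summable_one_div_nat_add_one_mul_add (by linarith)).mul_left _)]
  have hterm (n : ℕ) :
      (1 + x) * (1 / (((n : ℝ) + 1) * (1 + x + ((n : ℝ) + 1))))
        - (1 - x) * (1 / (((n : ℝ) + 1) * (1 - x + ((n : ℝ) + 1))))
        = 2 * x * (1 / ((((n + 1 : ℕ) : ℝ) + 1) ^ 2 - x ^ 2)) := by
    have hn : (0 : ℝ) ≤ n := n.cast_nonneg
    rw [mul_one_div, mul_one_div,
      one_add_div_sub_one_sub_div (by positivity) (by linarith) (by linarith)]
    push_cast
    rfl
  rw [tsum_congr hterm, tsum_mul_left, Nat.cast_zero, zero_add, one_pow]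
  ring

theorem stmt4_general (p : ℕ) (t : ℝ) (ht : |t| < (p : ℝ)) :
    2 * S p t =
      t * (2 * p * t / ((p : ℝ) ^ 2 - t ^ 2) - (1 - t / p) * A₁ p t + (1 + t / p) * B₁ p t) := by
  have hp : (0 : ℝ) < p := (abs_nonneg t).trans_lt ht
  obtain ⟨x, rfl⟩ : ∃ x, t = p * x := ⟨t / p, by field_simp⟩
  have hx : |x| < 1 := by rwa [abs_mul, abs_of_pos hp, mul_lt_iff_lt_one_right hp] at ht
  have hx2 : 1 - x ^ 2 ≠ 0 := (sub_pos.mpr ((sq_lt_one_iff_abs_lt_one x).mpr hx)).ne'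
  have hxp : (p : ℝ) * x / p = x := by field_simp
  have hfrac : 2 * (p : ℝ) * (p * x) / (p ^ 2 - (p * x) ^ 2) = 2 * x / (1 - x ^ 2) := by
    field_simp
  rw [S_eq_mul_tsum p _ hp.ne', A₁, B₁, hxp, tsum_riemannZeta_two_mul_nat_add_two_mul_pow hx,
    hfrac]
  linear_combination -(p * x) * one_add_mul_tsum_sub_one_sub_mul_tsum hx

theorem stmt4 (p : ℕ) (hp : p.Prime) (t : ℝ) (ht : |t| < (p : ℝ)) :
    2 * S p t =
      t * (2 * p * t / ((p : ℝ) ^ 2 - t ^ 2) - (1 - t / p) * A₁ p t + (1 + t / p) * B₁ p t) :=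
  stmt4_general p t ht
end
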